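/- arXiv:math/0009111 — 3 statements merged into one kernel-verified Lean document; each statement's English description precedes it below -/
import Mathlib

section
/- Characterization of Υ_l via systems of paths (Proposition 3.5.2): for any conjugacy classes C₁,…,C_l in G, Υ_l(C₁,…,C_l) equals the infimum, over all systems of paths a = (a₁,…,a_l) with a₁(0)·…·a_l(0) = 1 and aᵢ(1) ∈ Cᵢ for i = 1,…,l, of the total length of the system, length(a) = Σᵢ Var(aᵢ), where Var(aᵢ) is the total variation of the map aᵢ : [0,1] → G with respect to the pseudometric ρ (i.e. the supremum over finite partitions 0 = t₀ ≤ t₁ ≤ … ≤ t_k = 1 of Σⱼ ρ(aᵢ(t_{j−1}), aᵢ(t_j))); the equality holds as an equality in [0, ∞]. -/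
open scoped ENNReal

/-- The total variation (with respect to the pseudometric `ρ`) of a path `a : [0,1] → G`,
i.e. the supremum over finite partitions `0 = t₀ ≤ t₁ ≤ … ≤ t_k = 1` of
`Σⱼ ρ (a t_{j−1}) (a t_j)`, as a value in `[0, ∞]`. -/
noncomputable def pathVariation {G : Type*} (ρ : G → G → ℝ) (a : ℝ → G) : ℝ≥0∞ :=
  sSup {v : ℝ≥0∞ | ∃ (k : ℕ) (t : Fin (k + 1) → ℝ),
    Monotone t ∧ t 0 = 0 ∧ t (Fin.last k) = 1 ∧
    v = ∑ j : Fin k, ENNReal.ofReal (ρ (a (t j.castSucc)) (a (t j.succ)))}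

/-!
Along a system of paths the product `a₁(t)⋯a_l(t)` moves from `1` to an element of
`C₁⋯C_l`, and by bi-invariance a product moves by at most the sum of the displacements of
its factors, each bounded by the variation of its path. Conversely, paths need not be
continuous: given `φᵢ ∈ Cᵢ` with product `P`, let the first path jump once from `P⁻¹φ₁` to `φ₁`
and keep the others constant; this system has length `ρ(P⁻¹φ₁, φ₁) = ρ(1, P)`.
-/

section

variable {G : Type*} (ρ : G → G → ℝ)

lemma ofReal_le_pathVariation (a : ℝ → G) :
    ENNReal.ofReal (ρ (a 0) (a 1)) ≤ pathVariation ρ a := by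
  refine le_sSup ⟨1, fun j => ((j : ℕ) : ℝ), fun _ _ h => Nat.cast_le.2 h, ?_, ?_, ?_⟩ <;>
    simp [Fin.last]

lemma card_filter_crossing_le_one {k : ℕ} {t : Fin (k + 1) → ℝ} (ht : Monotone t) (s : ℝ) :
    (Finset.univ.filter fun j : Fin k => t j.castSucc ≤ s ∧ s < t j.succ).card ≤ 1 := by
  have not_lt_of_crossing : ∀ i j : Fin k, t i.castSucc ≤ s ∧ s < t i.succ →
      t j.castSucc ≤ s ∧ s < t j.succ → ¬ i < j := fun i j hi hj hij =>
    (hi.2.trans_le (ht (Fin.succ_le_castSucc_iff.2 hij))).not_ge hj.1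
  simp only [Finset.card_le_one, Finset.mem_filter, Finset.mem_univ, true_and]
  exact fun i hi j hj => le_antisymm (not_lt.1 (not_lt_of_crossing j i hj hi))
    (not_lt.1 (not_lt_of_crossing i j hi hj))

noncomputable def jumpPath (u v : G) : ℝ → G := fun t => if t ≤ 0 then u else v

lemma pathVariation_jumpPath_le (hrefl : ∀ x, ρ x x = 0) (u v : G) :
    pathVariation ρ (jumpPath u v) ≤ ENNReal.ofReal (ρ u v) := by
  refine sSup_le ?_
  rintro _ ⟨k, t, ht, -, -, rfl⟩
  set c := ENNReal.ofReal (ρ u v)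
  have step_le : ∀ j : Fin k, ENNReal.ofReal (ρ (jumpPath u v (t j.castSucc))
      (jumpPath u v (t j.succ))) ≤ if t j.castSucc ≤ 0 ∧ 0 < t j.succ then c else 0 := by
    intro j
    by_cases ha : t j.castSucc ≤ 0 <;> by_cases hb : t j.succ ≤ 0
    · simp [jumpPath, ha, hb, hrefl]
    · simp [jumpPath, ha, hb, c, lt_of_not_ge hb]
    · exact absurd (ht (Fin.castSucc_le_succ j)) (by linarith)
    · simp [jumpPath, ha, hb, hrefl]
  calc _ ≤ ∑ j : Fin k, if t j.castSucc ≤ 0 ∧ 0 < t j.succ then c else 0 :=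
        Finset.sum_le_sum fun j _ => step_le j
    _ = (Finset.univ.filter fun j : Fin k => t j.castSucc ≤ 0 ∧ 0 < t j.succ).card • c := by
        rw [Finset.sum_ite, Finset.sum_const_zero, add_zero, Finset.sum_const]
    _ ≤ 1 • c := nsmul_le_nsmul_left bot_le (card_filter_crossing_le_one ht 0)
    _ = c := one_nsmul c

end

section

variable {G : Type*} [Group G] (ρ : G → G → ℝ)

lemma rho_mul_mul_le (htri : ∀ x y z, ρ x z ≤ ρ x y + ρ y z)
    (hbi : ∀ g h x y, ρ (g * x * h) (g * y * h) = ρ x y) (x x' y y' : G) :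
    ρ (x * y) (x' * y') ≤ ρ x x' + ρ y y' := by
  have right : ρ (x * y) (x' * y) = ρ x x' := by simpa using hbi 1 y x x'
  have left : ρ (x' * y) (x' * y') = ρ y y' := by simpa using hbi x' 1 y y'
  simpa [right, left] using htri (x * y) (x' * y) (x' * y')

lemma ofReal_rho_prod_le_sum (hrefl : ∀ x, ρ x x = 0) (htri : ∀ x y z, ρ x z ≤ ρ x y + ρ y z)
    (hbi : ∀ g h x y, ρ (g * x * h) (g * y * h) = ρ x y) {l : ℕ} (u v : Fin l → G) :
    ENNReal.ofReal (ρ (List.ofFn u).prod (List.ofFn v).prod) ≤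
      ∑ i, ENNReal.ofReal (ρ (u i) (v i)) := by
  induction l with
  | zero => simp [hrefl]
  | succ n ih =>
    simp only [List.ofFn_succ, List.prod_cons, Fin.sum_univ_succ]
    calc _ ≤ ENNReal.ofReal (ρ (u 0) (v 0) +
          ρ (List.ofFn fun i => u i.succ).prod (List.ofFn fun i => v i.succ).prod) :=
          ENNReal.ofReal_le_ofReal (rho_mul_mul_le ρ htri hbi _ _ _ _)
      _ ≤ _ := ENNReal.ofReal_add_le.trans (add_le_add_right (ih _ _) _)

lemma exists_prod_eq_one_sum_rho_le (hrefl : ∀ x, ρ x x = 0)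
    (hbi : ∀ g h x y, ρ (g * x * h) (g * y * h) = ρ x y) {l : ℕ} (φ : Fin l → G) :
    ∃ ψ : Fin l → G, (List.ofFn ψ).prod = 1 ∧
      ∑ i, ENNReal.ofReal (ρ (ψ i) (φ i)) ≤ ENNReal.ofReal (ρ 1 (List.ofFn φ).prod) := by
  cases l with
  | zero => exact ⟨φ, by simp, by simp⟩
  | succ n =>
    set P := (List.ofFn φ).prod with hP
    have hP' : P = φ 0 * (List.ofFn (Fin.tail φ)).prod := by
      rw [hP, List.ofFn_succ, List.prod_cons]; rfl
    refine ⟨Fin.cons (P⁻¹ * φ 0) (Fin.tail φ), ?_, le_of_eq ?_⟩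
    · rw [List.ofFn_succ, List.prod_cons, Fin.cons_zero]
      simp only [Fin.cons_succ, mul_assoc, ← hP', inv_mul_cancel]
    · have jump : ρ (P⁻¹ * φ 0) (φ 0) = ρ 1 P := by
        simpa [mul_assoc] using (hbi P (φ 0)⁻¹ (P⁻¹ * φ 0) (φ 0)).symm
      simp [Fin.sum_univ_succ, Fin.tail, hrefl, jump]

end

theorem upsilon_eq_inf_length_of_systems_of_paths_general
    {G : Type*} [Group G] (ρ : G → G → ℝ)
    (hrefl : ∀ x, ρ x x = 0)
    (htri : ∀ x y z, ρ x z ≤ ρ x y + ρ y z)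
    (hbi : ∀ g h x y, ρ (g * x * h) (g * y * h) = ρ x y)
    {l : ℕ} (g : Fin l → G) :
    sInf {r : ℝ≥0∞ | ∃ φ : Fin l → G,
        (∀ i, ∃ x : G, φ i = x * g i * x⁻¹) ∧
          r = ENNReal.ofReal (ρ 1 (List.ofFn φ).prod)} =
      sInf {L : ℝ≥0∞ | ∃ a : Fin l → ℝ → G,
        (List.ofFn (fun i => a i 0)).prod = 1 ∧
          (∀ i, ∃ x : G, a i 1 = x * g i * x⁻¹) ∧
          L = ∑ i : Fin l, pathVariation ρ (a i)} := by
  apply le_antisymm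
  · refine le_sInf ?_
    rintro _ ⟨a, hstart, hend, rfl⟩
    refine sInf_le_of_le ⟨fun i => a i 1, hend, rfl⟩ ?_
    calc _ ≤ ∑ i, ENNReal.ofReal (ρ (a i 0) (a i 1)) := by
          simpa [hstart] using ofReal_rho_prod_le_sum ρ hrefl htri hbi (a · 0) (a · 1)
      _ ≤ _ := Finset.sum_le_sum fun i _ => ofReal_le_pathVariation ρ (a i)
  · refine le_sInf ?_
    rintro _ ⟨φ, hφ, rfl⟩
    obtain ⟨ψ, hψ, hle⟩ := exists_prod_eq_one_sum_rho_le ρ hrefl hbi φ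
    refine sInf_le_of_le ⟨fun i => jumpPath (ψ i) (φ i), by simpa [jumpPath] using hψ,
      by simpa [jumpPath, zero_lt_one.not_ge] using hφ, rfl⟩ ?_
    exact (Finset.sum_le_sum fun i _ => pathVariation_jumpPath_le ρ hrefl (ψ i) (φ i)).trans hle

/-- Proposition 3.5.2: `Υ_l (C₁, …, C_l)` equals the infimum, over all systems
of paths `a = (a₁, …, a_l)` with `a₁(0) ⬝ … ⬝ a_l(0) = 1` and `aᵢ(1) ∈ Cᵢ`, of the total
length `Σᵢ Var(aᵢ)`, as an equality in `[0, ∞]`. -/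
theorem upsilon_eq_inf_length_of_systems_of_paths
    {G : Type*} [Group G] (ρ : G → G → ℝ)
    (hrefl : ∀ x, ρ x x = 0)
    (hsymm : ∀ x y, ρ x y = ρ y x)
    (hnonneg : ∀ x y, 0 ≤ ρ x y)
    (htri : ∀ x y z, ρ x z ≤ ρ x y + ρ y z)
    (hbi : ∀ g h x y, ρ (g * x * h) (g * y * h) = ρ x y)
    {l : ℕ} (g : Fin l → G) :
    sInf {r : ℝ≥0∞ | ∃ φ : Fin l → G,
        (∀ i, ∃ x : G, φ i = x * g i * x⁻¹) ∧
          r = ENNReal.ofReal (ρ 1 (List.ofFn φ).prod)} =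
      sInf {L : ℝ≥0∞ | ∃ a : Fin l → ℝ → G,
        (List.ofFn (fun i => a i 0)).prod = 1 ∧
          (∀ i, ∃ x : G, a i 1 = x * g i * x⁻¹) ∧
          L = ∑ i : Fin l, pathVariation ρ (a i)} :=
  upsilon_eq_inf_length_of_systems_of_paths_general ρ hrefl htri hbi g
end

section
/- Key inequality in the proof of Proposition 3.5.2: let C₁ = C(g₁), …, C_l = C(g_l) be conjugacy classes in G. Then for any f₁,…,f_l ∈ G with f₁·f₂·…·f_l = 1 and any ψᵢ ∈ Cᵢ, i = 1,…,l, one has Σ_{i=1}^{l} ρ(1, fᵢ·ψᵢ⁻¹) ≥ inf{ ρ(1, φ₁⁻¹·φ₂⁻¹·…·φ_l⁻¹) : φᵢ ∈ Cᵢ, i = 1,…,l }. -/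
private lemma subadd_aux {G : Type*} [Group G] (ρ : G → G → ℝ)
    (hrefl : ∀ x, ρ x x = 0)
    (htri : ∀ x y z, ρ x z ≤ ρ x y + ρ y z)
    (hbi : ∀ g h x y, ρ (g * x * h) (g * y * h) = ρ x y) :
    ∀ (l : ℕ) (a : Fin l → G), ρ 1 (List.ofFn a).prod ≤ ∑ i : Fin l, ρ 1 (a i) := by
  intro l
  induction l with
  | zero => intro a; simp [hrefl]
  | succ n ih =>
    intro a
    rw [List.ofFn_succ, List.prod_cons, Fin.sum_univ_succ]
    calc ρ 1 (a 0 * (List.ofFn fun i => a i.succ).prod)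
        ≤ ρ 1 (a 0) + ρ (a 0) (a 0 * (List.ofFn fun i => a i.succ).prod) := htri _ _ _
      _ = ρ 1 (a 0) + ρ 1 (List.ofFn fun i => a i.succ).prod := by
          have := hbi (a 0) 1 1 (List.ofFn fun i => a i.succ).prod
          simp only [mul_one] at this
          rw [this]
      _ ≤ ρ 1 (a 0) + ∑ i : Fin n, ρ 1 (a i.succ) := by
          have := ih (fun i => a i.succ); linarith

private lemma ex_aux {G : Type*} [Group G] :
    ∀ (l : ℕ) (g f ψ : Fin l → G), (∀ i, ∃ x : G, ψ i = x * g i * x⁻¹) →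
    ∀ P : G, ∃ φ : Fin l → G, (∀ i, ∃ x : G, φ i = x * g i * x⁻¹) ∧
      (List.ofFn fun i => (φ i)⁻¹).prod
        = P * (List.ofFn fun i => f i * (ψ i)⁻¹).prod * ((List.ofFn f).prod)⁻¹ * P⁻¹ := by
  intro l
  induction l with
  | zero =>
    intro g f ψ _ P
    exact ⟨fun i => i.elim0, fun i => i.elim0, by simp⟩
  | succ n ih =>
    intro g f ψ hψ P
    obtain ⟨φ', hφ'conj, hφ'prod⟩ :=
      ih (fun i => g i.succ) (fun i => f i.succ) (fun i => ψ i.succ)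
        (fun i => hψ i.succ) (P * f 0)
    refine ⟨Fin.cons (P * f 0 * ψ 0 * (P * f 0)⁻¹) φ', ?_, ?_⟩
    · intro i
      refine Fin.cases ?_ ?_ i
      · obtain ⟨x, hx⟩ := hψ 0
        exact ⟨P * f 0 * x, by simp [hx, Fin.cons_zero, mul_assoc]⟩
      · intro j
        obtain ⟨x, hx⟩ := hφ'conj j
        exact ⟨x, by simpa using hx⟩
    · rw [List.ofFn_succ, List.prod_cons]
      simp only [Fin.cons_succ, Fin.cons_zero]
      rw [hφ'prod]
      rw [List.ofFn_succ (f := fun i => f i * (ψ i)⁻¹), List.prod_cons,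
        List.ofFn_succ (f := f), List.prod_cons]
      group

/-- key inequality in the proof of Proposition 3.5.2: if `f₁ ⬝ … ⬝ f_l = 1` and
`ψᵢ ∈ Cᵢ = C(gᵢ)`, then
`Σᵢ ρ(1, fᵢ ⬝ ψᵢ⁻¹) ≥ inf {ρ(1, φ₁⁻¹ ⬝ … ⬝ φ_l⁻¹) : φᵢ ∈ Cᵢ}`. -/
theorem sum_dist_ge_inf_inverted_product
    {G : Type*} [Group G] (ρ : G → G → ℝ)
    (hrefl : ∀ x, ρ x x = 0)
    (hsymm : ∀ x y, ρ x y = ρ y x)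
    (hnonneg : ∀ x y, 0 ≤ ρ x y)
    (htri : ∀ x y z, ρ x z ≤ ρ x y + ρ y z)
    (hbi : ∀ g h x y, ρ (g * x * h) (g * y * h) = ρ x y)
    {l : ℕ} (g : Fin l → G) (f ψ : Fin l → G)
    (hf : (List.ofFn f).prod = 1)
    (hψ : ∀ i, ∃ x : G, ψ i = x * g i * x⁻¹) :
    ∑ i : Fin l, ρ 1 (f i * (ψ i)⁻¹) ≥
      sInf {r : ℝ | ∃ φ : Fin l → G,
        (∀ i, ∃ x : G, φ i = x * g i * x⁻¹) ∧
          r = ρ 1 (List.ofFn (fun i => (φ i)⁻¹)).prod} := by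
  obtain ⟨φ, hconj, hprod⟩ := ex_aux l g f ψ hψ 1
  rw [hf] at hprod
  simp only [one_mul, inv_one, mul_one] at hprod
  have hmem : ρ 1 (List.ofFn fun i => f i * (ψ i)⁻¹).prod ∈
      {r : ℝ | ∃ φ : Fin l → G,
        (∀ i, ∃ x : G, φ i = x * g i * x⁻¹) ∧
          r = ρ 1 (List.ofFn (fun i => (φ i)⁻¹)).prod} :=
    ⟨φ, hconj, by rw [hprod]⟩
  have hbdd : BddBelow {r : ℝ | ∃ φ : Fin l → G,
      (∀ i, ∃ x : G, φ i = x * g i * x⁻¹) ∧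
        r = ρ 1 (List.ofFn (fun i => (φ i)⁻¹)).prod} := by
    refine ⟨0, fun r hr => ?_⟩
    obtain ⟨φ, _, hre⟩ := hr
    rw [hre]; exact hnonneg _ _
  calc sInf _ ≤ ρ 1 (List.ofFn fun i => f i * (ψ i)⁻¹).prod := csInf_le hbdd hmem
    _ ≤ ∑ i : Fin l, ρ 1 (f i * (ψ i)⁻¹) := subadd_aux ρ hrefl htri hbi l _
end

section
/- Description of Δ^{SU(2)}_3 (Example 2.4.3): let ζ₁, ζ₂, ζ₃ ∈ [0, 1/2]. Then there exist matrices A₁, A₂, A₃ in SU(2) with A₁·A₂·A₃ = 1 and trace(Aⱼ) = 2·cos(2π·ζⱼ) for j = 1, 2, 3 (equivalently, Aⱼ has eigenvalues e^{2πi·ζⱼ} and e^{−2πi·ζⱼ}) if and only if the following four inequalities hold: ζ₁ + ζ₂ + ζ₃ ≤ 1, ζ₁ ≤ ζ₂ + ζ₃, ζ₂ ≤ ζ₁ + ζ₃, and ζ₃ ≤ ζ₁ + ζ₂. -/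
open scoped Real

section SU2Aux

open Complex Matrix

noncomputable def su2mk (a b : ℂ) : Matrix (Fin 2) (Fin 2) ℂ :=
  !![a, b; -(starRingEnd ℂ) b, (starRingEnd ℂ) a]

lemma su2mk_mul (a b a' b' : ℂ) :
    su2mk a b * su2mk a' b' =
      su2mk (a * a' - b * (starRingEnd ℂ) b') (a * b' + b * (starRingEnd ℂ) a') := by
  ext i j
  fin_cases i <;> fin_cases j <;>
    simp [su2mk, Matrix.mul_apply, Fin.sum_univ_two, _root_.map_mul, _root_.map_add,
      map_sub] <;> ring

lemma su2mk_one : su2mk 1 0 = 1 := by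
  ext i j
  fin_cases i <;> fin_cases j <;> simp [su2mk, Matrix.one_apply]

lemma su2mk_trace (a b : ℂ) : Matrix.trace (su2mk a b) = 2 * (a.re : ℂ) := by
  simp [su2mk, Matrix.trace_fin_two]
  rw [Complex.add_conj]
  push_cast; ring

lemma su2mk_mem (a b : ℂ) (h : Complex.normSq a + Complex.normSq b = 1) :
    su2mk a b ∈ Matrix.specialUnitaryGroup (Fin 2) ℂ := by
  rw [Matrix.mem_specialUnitaryGroup_iff]
  constructor
  · rw [Matrix.mem_unitaryGroup_iff]
    have hstar : star (su2mk a b) = su2mk ((starRingEnd ℂ) a) (-b) := by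
      ext i j
      fin_cases i <;> fin_cases j <;> simp [su2mk, Matrix.star_apply]
    rw [hstar, su2mk_mul]
    have hh : a * (starRingEnd ℂ) a + b * (starRingEnd ℂ) b = 1 := by
      rw [Complex.mul_conj, Complex.mul_conj]
      norm_cast
    rw [show a * (starRingEnd ℂ) a - b * (starRingEnd ℂ) (-b) = 1 by
      rw [map_neg]; linear_combination hh]
    rw [show a * (-b) + b * (starRingEnd ℂ) ((starRingEnd ℂ) a) = 0 by simp; ring]
    exact su2mk_one
  · show (su2mk a b).det = 1
    rw [su2mk, Matrix.det_fin_two_of]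
    rw [show a * (starRingEnd ℂ) a - b * -(starRingEnd ℂ) b
        = a * (starRingEnd ℂ) a + b * (starRingEnd ℂ) b by ring]
    rw [Complex.mul_conj, Complex.mul_conj]
    norm_cast

lemma su2mk_exists {A : Matrix (Fin 2) (Fin 2) ℂ}
    (hA : A ∈ Matrix.specialUnitaryGroup (Fin 2) ℂ) :
    ∃ a b : ℂ, Complex.normSq a + Complex.normSq b = 1 ∧ A = su2mk a b := by
  rw [Matrix.mem_specialUnitaryGroup_iff] at hA
  obtain ⟨hu, hd⟩ := hA
  have hu' : star A * A = 1 := Matrix.mem_unitaryGroup_iff'.mp hu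
  have hadj : star A = A.adjugate := by
    calc star A = star A * (A * A.adjugate) := by rw [Matrix.mul_adjugate, hd]; simp
    _ = (star A * A) * A.adjugate := by rw [mul_assoc]
    _ = A.adjugate := by rw [hu', one_mul]
  have hfin : A.adjugate = !![A 1 1, -(A 0 1); -(A 1 0), A 0 0] := by
    rw [Matrix.eta_fin_two A, Matrix.adjugate_fin_two]
  have h11 : A 1 1 = (starRingEnd ℂ) (A 0 0) := by
    have := congrFun (congrFun hadj 0) 0
    rw [hfin] at this
    simpa [Matrix.star_apply] using this.symm
  have h10 : A 1 0 = -(starRingEnd ℂ) (A 0 1) := by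
    have := congrFun (congrFun hadj 1) 0
    rw [hfin] at this
    simp [Matrix.star_apply] at this
    rw [eq_comm, neg_eq_iff_eq_neg] at this
    rw [this]
  refine ⟨A 0 0, A 0 1, ?_, ?_⟩
  · have hdet : A 0 0 * A 1 1 - A 0 1 * A 1 0 = 1 := by
      rw [← hd, Matrix.det_fin_two]
    rw [h11, h10] at hdet
    have : (Complex.normSq (A 0 0) + Complex.normSq (A 0 1) : ℂ) = 1 := by
      rw [← Complex.mul_conj, ← Complex.mul_conj]
      linear_combination hdet
    exact_mod_cast this
  · conv_lhs => rw [Matrix.eta_fin_two A]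
    rw [su2mk, h11, h10]

lemma cos_bounds_of_ineq {θ₁ θ₂ θ₃ : ℝ}
    (h₁ : θ₁ ∈ Set.Icc 0 π) (h₂ : θ₂ ∈ Set.Icc 0 π) (h₃ : θ₃ ∈ Set.Icc 0 π)
    (ha : θ₃ ≤ θ₁ + θ₂) (hb : θ₁ + θ₂ + θ₃ ≤ 2 * π)
    (hc : θ₁ ≤ θ₂ + θ₃) (hd : θ₂ ≤ θ₁ + θ₃) :
    Real.cos (θ₁ + θ₂) ≤ Real.cos θ₃ ∧ Real.cos θ₃ ≤ Real.cos (θ₁ - θ₂) := by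
  obtain ⟨h1l, h1r⟩ := h₁; obtain ⟨h2l, h2r⟩ := h₂; obtain ⟨h3l, h3r⟩ := h₃
  constructor
  · rcases le_or_gt (θ₁ + θ₂) π with h | h
    · exact Real.cos_le_cos_of_nonneg_of_le_pi h3l h ha
    · rw [← Real.cos_two_pi_sub (θ₁ + θ₂)]
      exact Real.cos_le_cos_of_nonneg_of_le_pi h3l (by linarith) (by linarith)
  · rcases le_total θ₂ θ₁ with h | h
    · exact Real.cos_le_cos_of_nonneg_of_le_pi (by linarith) h3r (by linarith)
    · rw [show θ₁ - θ₂ = -(θ₂ - θ₁) by ring, Real.cos_neg]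
      exact Real.cos_le_cos_of_nonneg_of_le_pi (by linarith) h3r (by linarith)

lemma ineq_of_cos_bounds {θ₁ θ₂ θ₃ : ℝ}
    (h₁ : θ₁ ∈ Set.Icc 0 π) (h₂ : θ₂ ∈ Set.Icc 0 π) (h₃ : θ₃ ∈ Set.Icc 0 π)
    (hlo : Real.cos (θ₁ + θ₂) ≤ Real.cos θ₃) (hhi : Real.cos θ₃ ≤ Real.cos (θ₁ - θ₂)) :
    θ₃ ≤ θ₁ + θ₂ ∧ θ₁ + θ₂ + θ₃ ≤ 2 * π ∧ θ₁ ≤ θ₂ + θ₃ ∧ θ₂ ≤ θ₁ + θ₃ := by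
  obtain ⟨h1l, h1r⟩ := h₁; obtain ⟨h2l, h2r⟩ := h₂; obtain ⟨h3l, h3r⟩ := h₃
  have pi_pos := Real.pi_pos
  have key : ∀ x y : ℝ, x ∈ Set.Icc 0 π → y ∈ Set.Icc 0 π → Real.cos x ≤ Real.cos y → y ≤ x := by
    intro x y hx hy hcos
    by_contra hxy
    exact absurd (Real.strictAntiOn_cos hx hy (not_le.mp hxy)) (not_lt.mpr hcos)
  refine ⟨?_, ?_, ?_, ?_⟩
  · rcases le_or_gt (θ₁ + θ₂) π with h | h
    · exact key _ _ ⟨by linarith, h⟩ ⟨h3l, h3r⟩ hlo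
    · linarith
  · rcases le_or_gt (θ₁ + θ₂) π with h | h
    · linarith
    · have := key (2 * π - (θ₁ + θ₂)) θ₃ ⟨by linarith, by linarith⟩ ⟨h3l, h3r⟩
        (by rwa [Real.cos_two_pi_sub])
      linarith
  · rcases le_total θ₂ θ₁ with h | h
    · have := key θ₃ (θ₁ - θ₂) ⟨h3l, h3r⟩ ⟨by linarith, by linarith⟩ hhi
      linarith
    · linarith
  · rcases le_total θ₂ θ₁ with h | h
    · linarith
    · have := key θ₃ (θ₂ - θ₁) ⟨h3l, h3r⟩ ⟨by linarith, by linarith⟩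
        (by rwa [show θ₁ - θ₂ = -(θ₂ - θ₁) by ring, Real.cos_neg] at hhi)
      linarith

lemma cs_bound {x₁ n₁ s₁ x₂ n₂ s₂ p : ℝ}
    (e₁ : x₁ ^ 2 + n₁ = s₁ ^ 2) (e₂ : x₂ ^ 2 + n₂ = s₂ ^ 2)
    (hs₁ : 0 ≤ s₁) (hs₂ : 0 ≤ s₂) (hn₁ : 0 ≤ n₁) (hn₂ : 0 ≤ n₂)
    (hp : p ^ 2 ≤ n₁ * n₂) : |x₁ * x₂ + p| ≤ s₁ * s₂ := by
  set q₁ := Real.sqrt n₁ with hq₁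
  set q₂ := Real.sqrt n₂ with hq₂
  have hq₁sq : q₁ ^ 2 = n₁ := Real.sq_sqrt hn₁
  have hq₂sq : q₂ ^ 2 = n₂ := Real.sq_sqrt hn₂
  have hq₁0 : 0 ≤ q₁ := Real.sqrt_nonneg _
  have hq₂0 : 0 ≤ q₂ := Real.sqrt_nonneg _
  have habs : |p| ≤ q₁ * q₂ := by
    nlinarith [abs_nonneg p, _root_.sq_abs p, mul_nonneg hq₁0 hq₂0]
  rw [abs_le]
  constructor
  · nlinarith [sq_nonneg (x₁ * q₂ + x₂ * q₁), sq_nonneg (x₁ * x₂ - q₁ * q₂ + s₁ * s₂),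
      neg_abs_le p, mul_nonneg hs₁ hs₂, sq_nonneg (s₁ * s₂ - x₁ * x₂ + q₁ * q₂)]
  · nlinarith [sq_nonneg (x₁ * q₂ - x₂ * q₁), le_abs_self p, mul_nonneg hs₁ hs₂,
      sq_nonneg (s₁ * s₂ - x₁ * x₂ - q₁ * q₂), sq_nonneg (x₁ * x₂ + q₁ * q₂ + s₁ * s₂)]

end SU2Aux

/-- Example 2.4.3, description of `Δ^{SU(2)}_3`: for `ζ₁, ζ₂, ζ₃ ∈ [0, 1/2]`,
there are matrices `A₁, A₂, A₃ ∈ SU(2)` with `A₁A₂A₃ = 1` and `trace Aⱼ = 2 cos (2π ζⱼ)`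
(equivalently, `Aⱼ` has eigenvalues `e^{± 2πi ζⱼ}`) if and only if `ζ₁ + ζ₂ + ζ₃ ≤ 1`,
`ζ₁ ≤ ζ₂ + ζ₃`, `ζ₂ ≤ ζ₁ + ζ₃` and `ζ₃ ≤ ζ₁ + ζ₂`. -/
theorem su2_triple_product_eq_one_iff
    (ζ : Fin 3 → ℝ) (hζ : ∀ j, ζ j ∈ Set.Icc (0 : ℝ) (1 / 2)) :
    (∃ A : Fin 3 → Matrix.specialUnitaryGroup (Fin 2) ℂ,
        A 0 * A 1 * A 2 = 1 ∧
        ∀ j, Matrix.trace ((A j : Matrix (Fin 2) (Fin 2) ℂ)) =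
          ((2 * Real.cos (2 * π * ζ j) : ℝ) : ℂ)) ↔
      (ζ 0 + ζ 1 + ζ 2 ≤ 1 ∧ ζ 0 ≤ ζ 1 + ζ 2 ∧ ζ 1 ≤ ζ 0 + ζ 2 ∧ ζ 2 ≤ ζ 0 + ζ 1) := by
  have pi_pos := Real.pi_pos
  set θ : Fin 3 → ℝ := fun j => 2 * π * ζ j with hθdef
  have hθmem : ∀ j, θ j ∈ Set.Icc (0 : ℝ) π := by
    intro j
    obtain ⟨h0, h1⟩ := hζ j
    constructor
    · positivity
    · simp only [hθdef]
      nlinarith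
  have hsin : ∀ j, 0 ≤ Real.sin (θ j) := fun j =>
    Real.sin_nonneg_of_nonneg_of_le_pi (hθmem j).1 (hθmem j).2
  constructor
  · rintro ⟨A, hprod, htr⟩
    -- extract entries
    obtain ⟨a₀, b₀, hn₀, hA₀⟩ := su2mk_exists (A 0).2
    obtain ⟨a₁, b₁, hn₁, hA₁⟩ := su2mk_exists (A 1).2
    obtain ⟨a₂, b₂, hn₂, hA₂⟩ := su2mk_exists (A 2).2
    have hre : ∀ (j : Fin 3) (a b : ℂ), ((A j : Matrix (Fin 2) (Fin 2) ℂ)) = su2mk a b →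
        a.re = Real.cos (θ j) := by
      intro j a b hj
      have := htr j
      rw [hj, su2mk_trace] at this
      have : (2 * a.re : ℝ) = 2 * Real.cos (2 * π * ζ j) := by exact_mod_cast this
      simp only [hθdef]
      linarith
    have hre₀ := hre 0 a₀ b₀ hA₀
    have hre₁ := hre 1 a₁ b₁ hA₁
    have hre₂ := hre 2 a₂ b₂ hA₂
    -- the product relation at the matrix level
    have hmat : su2mk a₀ b₀ * su2mk a₁ b₁ * su2mk a₂ b₂ = 1 := by
      have := congrArg (Subtype.val) hprod
      rw [← hA₀, ← hA₁, ← hA₂]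
      exact this
    -- identify the first factor product with the inverse of the third
    set Ac := a₀ * a₁ - b₀ * (starRingEnd ℂ) b₁ with hAc
    set Bc := a₀ * b₁ + b₀ * (starRingEnd ℂ) a₁ with hBc
    have h12 : su2mk Ac Bc * su2mk a₂ b₂ = 1 := by
      rw [hAc, hBc, ← su2mk_mul]
      exact hmat
    have hCinv : su2mk a₂ b₂ * su2mk ((starRingEnd ℂ) a₂) (-b₂) = 1 := by
      rw [su2mk_mul]
      rw [show a₂ * (starRingEnd ℂ) a₂ - b₂ * (starRingEnd ℂ) (-b₂) = 1 by
        rw [map_neg]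
        rw [show a₂ * (starRingEnd ℂ) a₂ - b₂ * -(starRingEnd ℂ) b₂
            = a₂ * (starRingEnd ℂ) a₂ + b₂ * (starRingEnd ℂ) b₂ by ring,
          Complex.mul_conj, Complex.mul_conj]
        exact_mod_cast hn₂]
      rw [show a₂ * (-b₂) + b₂ * (starRingEnd ℂ) ((starRingEnd ℂ) a₂) = 0 by simp; ring]
      exact su2mk_one
    have hEq : su2mk Ac Bc = su2mk ((starRingEnd ℂ) a₂) (-b₂) := by
      calc su2mk Ac Bc = su2mk Ac Bc * (su2mk a₂ b₂ * su2mk ((starRingEnd ℂ) a₂) (-b₂)) := by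
            rw [hCinv, mul_one]
      _ = (su2mk Ac Bc * su2mk a₂ b₂) * su2mk ((starRingEnd ℂ) a₂) (-b₂) := by rw [mul_assoc]
      _ = su2mk ((starRingEnd ℂ) a₂) (-b₂) := by rw [h12, one_mul]
    have hAcEq : Ac = (starRingEnd ℂ) a₂ := by
      have := congrFun (congrFun hEq 0) 0
      simpa [su2mk] using this
    have hReAc : Ac.re = Real.cos (θ 2) := by
      rw [hAcEq, Complex.conj_re, hre₂]
    -- now the real inequality
    have hx₀ : a₀.im ^ 2 + Complex.normSq b₀ = Real.sin (θ 0) ^ 2 := by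
      have h1 : Complex.normSq a₀ = a₀.re ^ 2 + a₀.im ^ 2 := by
        rw [Complex.normSq_apply]; ring
      have h2 := Real.sin_sq_add_cos_sq (θ 0)
      rw [h1, hre₀] at hn₀
      linarith
    have hx₁ : a₁.im ^ 2 + Complex.normSq b₁ = Real.sin (θ 1) ^ 2 := by
      have h1 : Complex.normSq a₁ = a₁.re ^ 2 + a₁.im ^ 2 := by
        rw [Complex.normSq_apply]; ring
      have h2 := Real.sin_sq_add_cos_sq (θ 1)
      rw [h1, hre₁] at hn₁
      linarith
    have hp : (b₀ * (starRingEnd ℂ) b₁).re ^ 2 ≤ Complex.normSq b₀ * Complex.normSq b₁ := by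
      have h1 : (b₀ * (starRingEnd ℂ) b₁).re ^ 2 ≤ Complex.normSq (b₀ * (starRingEnd ℂ) b₁) := by
        rw [Complex.normSq_apply]
        nlinarith [sq_nonneg ((b₀ * (starRingEnd ℂ) b₁).im)]
      rw [Complex.normSq_mul, Complex.normSq_conj] at h1
      exact h1
    have hbound := cs_bound hx₀ hx₁ (hsin 0) (hsin 1)
      (Complex.normSq_nonneg b₀) (Complex.normSq_nonneg b₁) hp
    rw [abs_le] at hbound
    have hReAc' : Ac.re = a₀.re * a₁.re - a₀.im * a₁.im - (b₀ * (starRingEnd ℂ) b₁).re := by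
      rw [hAc]
      simp [Complex.sub_re, Complex.mul_re]
    have hlo : Real.cos (θ 0 + θ 1) ≤ Real.cos (θ 2) := by
      rw [Real.cos_add]
      rw [hReAc', hre₀, hre₁] at hReAc
      linarith [hbound.2]
    have hhi : Real.cos (θ 2) ≤ Real.cos (θ 0 - θ 1) := by
      rw [Real.cos_sub]
      rw [hReAc', hre₀, hre₁] at hReAc
      linarith [hbound.1]
    obtain ⟨i1, i2, i3, i4⟩ := ineq_of_cos_bounds (hθmem 0) (hθmem 1) (hθmem 2) hlo hhi
    simp only [hθdef] at i1 i2 i3 i4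
    have h2pi : (0:ℝ) < 2 * π := by linarith
    have key : ∀ x y : ℝ, 2 * π * x ≤ 2 * π * y → x ≤ y := fun x y h =>
      le_of_mul_le_mul_left h h2pi
    exact ⟨key _ _ (by linarith), key _ _ (by linarith), key _ _ (by linarith),
      key _ _ (by linarith)⟩
  · rintro ⟨i1, i2, i3, i4⟩
    have h2pi : (0:ℝ) ≤ 2 * π := by linarith
    obtain ⟨hlo, hhi⟩ := cos_bounds_of_ineq (hθmem 0) (hθmem 1) (hθmem 2)
      (by simp only [hθdef]; linarith [mul_le_mul_of_nonneg_left i4 h2pi])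
      (by simp only [hθdef]; linarith [mul_le_mul_of_nonneg_left i1 h2pi])
      (by simp only [hθdef]; linarith [mul_le_mul_of_nonneg_left i2 h2pi])
      (by simp only [hθdef]; linarith [mul_le_mul_of_nonneg_left i3 h2pi])
    set u := Real.cos (θ 0) with hu
    set v := Real.sin (θ 0) with hv
    set w := Real.cos (θ 1) with hw
    set z := Real.sin (θ 1) with hz
    set c₃ := Real.cos (θ 2) with hc₃
    rw [Real.cos_add] at hlo
    rw [Real.cos_sub] at hhi
    have hvz : 0 ≤ v * z := mul_nonneg (hsin 0) (hsin 1)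
    set t : ℝ := if v * z = 0 then 0 else (u * w - c₃) / (v * z) with ht
    have hteq : t * (v * z) = u * w - c₃ := by
      rcases eq_or_ne (v * z) 0 with h | h
      · rw [ht, if_pos h, h]
        rw [h] at hlo hhi
        ring_nf
        linarith
      · rw [ht, if_neg h, div_mul_cancel₀ _ h]
    have ht2 : t ^ 2 ≤ 1 := by
      rcases eq_or_ne (v * z) 0 with h | h
      · rw [ht, if_pos h]; norm_num
      · have hpos : 0 < v * z := lt_of_le_of_ne hvz (Ne.symm h)
        rw [ht, if_neg h, div_pow, div_le_one (by positivity)]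
        nlinarith
    -- define the matrices
    set a₁ : ℂ := (u : ℂ) + (v : ℂ) * Complex.I with ha₁
    set b₁ : ℂ := 0 with hb₁
    set a₂ : ℂ := (w : ℂ) + ((t * z : ℝ) : ℂ) * Complex.I with ha₂
    set b₂ : ℂ := ((Real.sqrt (1 - t ^ 2) * z : ℝ) : ℂ) * Complex.I with hb₂
    have hsqrt : Real.sqrt (1 - t ^ 2) ^ 2 = 1 - t ^ 2 := Real.sq_sqrt (by linarith)
    have hn₁ : Complex.normSq a₁ + Complex.normSq b₁ = 1 := by
      rw [ha₁, hb₁]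
      simp [Complex.normSq_add_mul_I]
      nlinarith [Real.sin_sq_add_cos_sq (θ 0)]
    have hn₂ : Complex.normSq a₂ + Complex.normSq b₂ = 1 := by
      have h1 : Complex.normSq a₂ = w ^ 2 + (t * z) ^ 2 := by
        rw [ha₂, Complex.normSq_add_mul_I]
      have h2 : Complex.normSq b₂ = (Real.sqrt (1 - t ^ 2) * z) ^ 2 := by
        rw [hb₂, Complex.normSq_mul, Complex.normSq_I, Complex.normSq_ofReal]
        ring
      have hzw : z ^ 2 + w ^ 2 = 1 := by
        rw [hz, hw]; exact Real.sin_sq_add_cos_sq (θ 1)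
      rw [h1, h2]
      linear_combination z ^ 2 * hsqrt + hzw
    have e1 : Complex.normSq a₁ = 1 := by
      rw [hb₁] at hn₁; simpa using hn₁
    have hn₃ : Complex.normSq ((starRingEnd ℂ) (a₁ * a₂)) + Complex.normSq (-(a₁ * b₂)) = 1 := by
      rw [Complex.normSq_conj, Complex.normSq_neg, Complex.normSq_mul, Complex.normSq_mul,
        e1, one_mul, one_mul]
      exact hn₂
    refine ⟨![⟨su2mk a₁ b₁, su2mk_mem _ _ hn₁⟩, ⟨su2mk a₂ b₂, su2mk_mem _ _ hn₂⟩,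
      ⟨su2mk ((starRingEnd ℂ) (a₁ * a₂)) (-(a₁ * b₂)), su2mk_mem _ _ hn₃⟩], ?_, ?_⟩
    · apply Subtype.ext
      show su2mk a₁ b₁ * su2mk a₂ b₂ * su2mk ((starRingEnd ℂ) (a₁ * a₂)) (-(a₁ * b₂)) = 1
      rw [su2mk_mul, su2mk_mul]
      rw [show (a₁ * a₂ - b₁ * (starRingEnd ℂ) b₂) * (starRingEnd ℂ) (a₁ * a₂)
            - (a₁ * b₂ + b₁ * (starRingEnd ℂ) a₂) * (starRingEnd ℂ) (-(a₁ * b₂)) = 1 by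
        rw [hb₁]
        simp only [zero_mul, sub_zero, add_zero, map_neg, mul_neg, sub_neg_eq_add,
          Complex.mul_conj]
        have : (Complex.normSq (a₁ * a₂) + Complex.normSq (a₁ * b₂) : ℝ) = 1 := by
          have := hn₃
          rwa [Complex.normSq_conj, Complex.normSq_neg] at this
        exact_mod_cast this]
      rw [show (a₁ * a₂ - b₁ * (starRingEnd ℂ) b₂) * (-(a₁ * b₂))
            + (a₁ * b₂ + b₁ * (starRingEnd ℂ) a₂) * (starRingEnd ℂ) ((starRingEnd ℂ) (a₁ * a₂))
            = 0 by
        rw [hb₁, Complex.conj_conj]; ring]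
      exact su2mk_one
    · intro j
      fin_cases j
      · show Matrix.trace (su2mk a₁ b₁) = ((2 * Real.cos (2 * π * ζ 0) : ℝ) : ℂ)
        rw [su2mk_trace]
        have hra : a₁.re = u := by rw [ha₁]; simp
        rw [hra, hu, hθdef]
        push_cast; ring
      · show Matrix.trace (su2mk a₂ b₂) = ((2 * Real.cos (2 * π * ζ 1) : ℝ) : ℂ)
        rw [su2mk_trace]
        have hra : a₂.re = w := by rw [ha₂]; simp
        rw [hra, hw, hθdef]
        push_cast; ring
      · show Matrix.trace (su2mk ((starRingEnd ℂ) (a₁ * a₂)) (-(a₁ * b₂)))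
            = ((2 * Real.cos (2 * π * ζ 2) : ℝ) : ℂ)
        rw [su2mk_trace]
        have hre3 : ((starRingEnd ℂ) (a₁ * a₂)).re = c₃ := by
          rw [Complex.conj_re, Complex.mul_re]
          have r1 : a₁.re = u := by rw [ha₁]; simp
          have r2 : a₂.re = w := by rw [ha₂]; simp
          have i1' : a₁.im = v := by rw [ha₁]; simp
          have i2' : a₂.im = t * z := by rw [ha₂]; simp
          rw [r1, r2, i1', i2']
          linarith [hteq]
        rw [hre3, hc₃, hθdef]
        push_cast; ring
end
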